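/- arXiv:1811.11924 — 8 statements merged into one kernel-verified Lean document; each statement's English description precedes it below -/
import Mathlib

section
/- For every simple acyclic digraph G on vertex set {1,…,n}, there exists a central multigraphical arrangement A such that the associated digraph G_A equals G. -/
/-!
Ranking each vertex by the number of vertices reachable from it gives a potential that
strictly decreases along every edge of an acyclic digraph; shifting it by its mean makes its
coordinates sum to zero. The hyperplanes `x_i - x_j = c_i - c_j`, one for each edge `i → j`,
then all pass through this centered potential `c`, and have positive constants.
-/

/-- A relation is acyclic if it has no directed cycle. -/
def IsAcyclicRel {α : Type*} (R : α → α → Prop) : Prop :=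
  ∀ v, ¬ Relation.TransGen R v v

open Finset

namespace IsAcyclicRel

variable {α : Type*} {R : α → α → Prop}

theorem ncard_transGen_lt [Finite α] (hR : IsAcyclicRel R) {a b : α} (hab : R a b) :
    {c | Relation.TransGen R b c}.ncard < {c | Relation.TransGen R a c}.ncard :=
  Set.ncard_lt_ncard <| Set.ssubset_def ▸
    ⟨fun _ hc => Relation.TransGen.head hab hc,
      fun hsub => hR b (hsub (Relation.TransGen.single hab))⟩

theorem exists_potential [Finite α] (hR : IsAcyclicRel R) :
    ∃ f : α → ℝ, ∀ a b, R a b → f b < f a :=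
  ⟨fun a => {c | Relation.TransGen R a c}.ncard,
    fun _ _ hab => Nat.cast_lt.2 (hR.ncard_transGen_lt hab)⟩

end IsAcyclicRel

theorem sum_sub_mean_eq_zero {ι : Type*} [Fintype ι] (f : ι → ℝ) :
    ∑ i, (f i - (∑ j, f j) / Fintype.card ι) = 0 := by
  cases isEmpty_or_nonempty ι
  · simp
  · rw [sum_sub_distrib, sum_const, card_univ, nsmul_eq_mul,
      mul_div_cancel₀ _ (Nat.cast_ne_zero.2 Fintype.card_ne_zero), sub_self]

theorem IsAcyclicRel.exists_centered_potential {α : Type*} [Fintype α] {R : α → α → Prop}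
    (hR : IsAcyclicRel R) : ∃ c : α → ℝ, ∑ a, c a = 0 ∧ ∀ a b, R a b → c b < c a := by
  obtain ⟨f, hf⟩ := hR.exists_potential
  exact ⟨fun a => f a - (∑ b, f b) / Fintype.card α, sum_sub_mean_eq_zero f,
    fun a b hab => sub_lt_sub_right (hf a b hab) _⟩

section edgeArrangement

variable {ι : Type*} [DecidableEq ι] (E : Finset (ι × ι)) (c : ι → ℝ)

noncomputable def edgeArrangement : Finset (ι × ι × ℝ) :=
  E.image fun e => (e.1, e.2, c e.1 - c e.2)

variable {E c}

theorem mem_edgeArrangement {t : ι × ι × ℝ} :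
    t ∈ edgeArrangement E c ↔ (t.1, t.2.1) ∈ E ∧ c t.1 - c t.2.1 = t.2.2 := by
  obtain ⟨i, j, a⟩ := t
  simp only [edgeArrangement, mem_image, Prod.exists, Prod.mk.injEq]
  constructor
  · rintro ⟨i, j, hij, rfl, rfl, rfl⟩
    exact ⟨hij, rfl⟩
  · rintro ⟨hij, rfl⟩
    exact ⟨i, j, hij, rfl, rfl, rfl⟩

variable (E c)

theorem card_filter_edgeArrangement (i j : ι) :
    ((edgeArrangement E c).filter fun t => t.1 = i ∧ t.2.1 = j).card =
      if (i, j) ∈ E then 1 else 0 := by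
  split_ifs with hij
  · rw [card_eq_one]
    refine ⟨(i, j, c i - c j), ?_⟩
    ext ⟨k, l, a⟩
    simp only [mem_filter, mem_edgeArrangement, mem_singleton, Prod.mk.injEq]
    constructor
    · rintro ⟨⟨-, rfl⟩, rfl, rfl⟩
      exact ⟨rfl, rfl, rfl⟩
    · rintro ⟨rfl, rfl, rfl⟩
      exact ⟨⟨hij, rfl⟩, rfl, rfl⟩
  · rw [card_eq_zero, filter_eq_empty_iff]
    rintro t ht ⟨rfl, rfl⟩
    exact hij (mem_edgeArrangement.1 ht).1

end edgeArrangement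

theorem exists_central_arrangement_general (n : ℕ) (E : Finset (Fin n × Fin n))
    (hacyclic : IsAcyclicRel fun a b : Fin n => (a, b) ∈ E) :
    ∃ A : Finset (Fin n × Fin n × ℝ),
      (∀ t ∈ A, 0 < t.2.2) ∧
      (∃ c : Fin n → ℝ, (∑ i, c i = 0) ∧ ∀ t ∈ A, c t.1 - c t.2.1 = t.2.2) ∧
      (∀ i j : Fin n,
        (A.filter fun t => t.1 = i ∧ t.2.1 = j).card = if (i, j) ∈ E then 1 else 0) := by
  obtain ⟨c, hsum, hdecr⟩ := hacyclic.exists_centered_potential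
  refine ⟨edgeArrangement E c, fun t ht => ?_, ⟨c, hsum, fun t ht => ?_⟩,
    card_filter_edgeArrangement E c⟩
  · obtain ⟨hE, hval⟩ := mem_edgeArrangement.1 ht
    exact hval ▸ sub_pos.2 (hdecr _ _ hE)
  · exact (mem_edgeArrangement.1 ht).2

/-- For every simple acyclic digraph `G` on `{1,…,n}` there is a central multigraphical
arrangement `A` (a finite set of hyperplanes `H_{i,j}^a = {x_i - x_j = a}`, `a > 0`, all
passing through a common point of `V = {∑ x_i = 0}`) whose associated digraph is `G`:
for each pair `(i,j)` the number of hyperplanes of the form `H_{i,j}^a` in `A` is `1` if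
`i → j` is an edge of `G` and `0` otherwise. -/
theorem exists_central_arrangement (n : ℕ) (E : Finset (Fin n × Fin n))
    (hsimple : ∀ e ∈ E, e.1 ≠ e.2)
    (hacyclic : IsAcyclicRel fun a b : Fin n => (a, b) ∈ E) :
    ∃ A : Finset (Fin n × Fin n × ℝ),
      (∀ t ∈ A, 0 < t.2.2) ∧
      (∃ c : Fin n → ℝ, (∑ i, c i = 0) ∧ ∀ t ∈ A, c t.1 - c t.2.1 = t.2.2) ∧
      (∀ i j : Fin n,
        (A.filter fun t => t.1 = i ∧ t.2.1 = j).card = if (i, j) ∈ E then 1 else 0) :=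
  exists_central_arrangement_general n E hacyclic
end

section
/- Let G be an acyclic digraph on {1,…,n} with all edges oriented increasingly (i → j implies i < j). Suppose there exist 1 ≤ k < i < j ≤ n with (k → i) ∈ E, (k → j) ∈ E, and (i → j) ∉ E. Then there exist two distinct acyclic reorientations G' and G'' of G whose Pak-Stanley labels coincide; in particular both have label λ with λ(v) = 0 for v ∉ {k, i}, where λ(v) for a reorientation is the number of edges of G with tail v whose orientation is reversed in the reorientation. -/
/-- The digraph obtained from the digraph with edge set `E` by reversing the edges in `S`. -/
def reorient {n : ℕ} (E S : Finset (Fin n × Fin n)) : Fin n → Fin n → Prop :=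
  fun a b => ((a, b) ∈ E ∧ (a, b) ∉ S) ∨ (b, a) ∈ S

/-- The Pak-Stanley label of the reorientation reversing the edges in `S`:
`psLabel S v` is the number of edges with tail `v` that are reversed. -/
def psLabel {n : ℕ} (S : Finset (Fin n × Fin n)) (v : Fin n) : ℕ :=
  (S.filter fun e => e.1 = v).card

/-- A relation admitting a strictly increasing weight function is acyclic. -/
lemma isAcyclicRel_of_wt {α : Type*} (R : α → α → Prop) (w : α → ℕ)
    (h : ∀ a b, R a b → w a < w b) : IsAcyclicRel R := by
  intro v hv
  have key : ∀ a b : α, Relation.TransGen R a b → w a < w b := by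
    intro a b hab
    induction hab with
    | single h' => exact h _ _ h'
    | tail _ h' ih => exact ih.trans (h _ _ h')
  exact lt_irrefl _ (key v v hv)

/-- If an increasingly oriented acyclic digraph has vertices `k < i < j` with edges
`k → i` and `k → j` but no edge `i → j`, then there are two distinct acyclic
reorientations with the same Pak-Stanley label, vanishing away from `k` and `i`. -/
theorem duplicate_labels_of_triple (n : ℕ) (E : Finset (Fin n × Fin n))
    (hE : ∀ e ∈ E, e.1 < e.2) (k i j : Fin n) (hki : k < i) (hij : i < j)
    (h1 : (k, i) ∈ E) (h2 : (k, j) ∈ E) (h3 : (i, j) ∉ E) :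
    ∃ S' S'' : Finset (Fin n × Fin n), S' ⊆ E ∧ S'' ⊆ E ∧ S' ≠ S'' ∧
      IsAcyclicRel (reorient E S') ∧ IsAcyclicRel (reorient E S'') ∧
      psLabel S' = psLabel S'' ∧
      (∀ v : Fin n, v ≠ k → v ≠ i → psLabel S' v = 0) := by
  classical
  have hki' : (k : ℕ) < i := hki
  have hij' : (i : ℕ) < j := hij
  have hkj' : (k : ℕ) < j := lt_trans hki' hij'
  have hkine : k ≠ i := ne_of_lt hki
  have hijne : i ≠ j := ne_of_lt hij
  set S1 : Finset (Fin n × Fin n) :=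
    E.filter (fun e => (e.1 = k ∨ e.1 = i) ∧ e.2 < j) with hS1
  set S2 : Finset (Fin n × Fin n) :=
    E.filter (fun e => ((e.1 = k ∨ e.1 = i) ∧ e.2 < j ∧ e ≠ (k, i)) ∨ e = (k, j)) with hS2
  have hkiS1 : (k, i) ∈ S1 := by
    rw [hS1, Finset.mem_filter]
    exact ⟨h1, Or.inl rfl, hij⟩
  have hkiS2 : (k, i) ∉ S2 := by
    rw [hS2, Finset.mem_filter]
    rintro ⟨-, ⟨-, -, hne⟩ | heq⟩
    · exact hne rfl
    · exact hijne (congrArg Prod.snd heq)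
  have htail1 : ∀ e ∈ S1, e.1 = k ∨ e.1 = i := by
    intro e he
    rw [hS1, Finset.mem_filter] at he
    exact he.2.1
  have htail2 : ∀ e ∈ S2, e.1 = k ∨ e.1 = i := by
    intro e he
    rw [hS2, Finset.mem_filter] at he
    rcases he.2 with ⟨h', -, -⟩ | h'
    · exact h'
    · exact Or.inl (congrArg Prod.fst h')
  have hz : ∀ (S : Finset (Fin n × Fin n)), (∀ e ∈ S, e.1 = k ∨ e.1 = i) →
      ∀ v : Fin n, v ≠ k → v ≠ i → psLabel S v = 0 := by
    intro S hall v hvk hvi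
    unfold psLabel
    rw [Finset.card_eq_zero, Finset.filter_eq_empty_iff]
    intro e he h
    rcases hall e he with h' | h'
    · exact hvk (h.symm.trans h')
    · exact hvi (h.symm.trans h')
  refine ⟨S1, S2, Finset.filter_subset _ _, Finset.filter_subset _ _, ?_, ?_, ?_, ?_,
    hz S1 htail1⟩
  · intro h
    rw [h] at hkiS1
    exact hkiS2 hkiS1
  · -- acyclicity of reorient E S1
    apply isAcyclicRel_of_wt _
      (fun v => if v = k then 4 * (j : ℕ) + 2 else if v = i then 4 * (j : ℕ) + 1
        else 4 * (v : ℕ) + 4)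
    rintro a b (⟨hab, hnS⟩ | hS)
    · have hab' : (a : ℕ) < b := hE _ hab
      rw [hS1, Finset.mem_filter] at hnS
      have hnS' : (a = k ∨ a = i) → ¬ b < j := fun h' hb => hnS ⟨hab, h', hb⟩
      by_cases hak : a = k
      · have hak' : (a : ℕ) = k := congrArg Fin.val hak
        have hbj : (j : ℕ) ≤ b := Fin.le_def.mp (le_of_not_gt (hnS' (Or.inl hak)))
        have hbk : ¬ b = k := fun h => by have := congrArg Fin.val h; omega
        have hbi : ¬ b = i := fun h => by have := congrArg Fin.val h; omega
        rw [if_pos hak, if_neg hbk, if_neg hbi]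
        omega
      · by_cases hai : a = i
        · have hai' : (a : ℕ) = i := congrArg Fin.val hai
          have hbj : (j : ℕ) ≤ b := Fin.le_def.mp (le_of_not_gt (hnS' (Or.inr hai)))
          have hbk : ¬ b = k := fun h => by have := congrArg Fin.val h; omega
          have hbi : ¬ b = i := fun h => by have := congrArg Fin.val h; omega
          rw [if_neg hak, if_pos hai, if_neg hbk, if_neg hbi]
          omega
        · rw [if_neg hak, if_neg hai]
          by_cases hbk : b = k
          · have := congrArg Fin.val hbk
            rw [if_pos hbk]
            omega
          · by_cases hbi : b = i
            · have := congrArg Fin.val hbi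
              rw [if_neg hbk, if_pos hbi]
              omega
            · rw [if_neg hbk, if_neg hbi]
              omega
    · rw [hS1, Finset.mem_filter] at hS
      have hbaE : (b, a) ∈ E := hS.1
      have hbki : b = k ∨ b = i := hS.2.1
      have haj' : (a : ℕ) < j := hS.2.2
      have hba' : (b : ℕ) < a := hE _ hbaE
      rcases hbki with hbk | hbi
      · have hbk' : (b : ℕ) = k := congrArg Fin.val hbk
        have hak : ¬ a = k := fun h => by have := congrArg Fin.val h; omega
        by_cases hai : a = i
        · rw [if_neg hak, if_pos hai, if_pos hbk]
          omega
        · rw [if_neg hak, if_neg hai, if_pos hbk]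
          omega
      · have hbi' : (b : ℕ) = i := congrArg Fin.val hbi
        have hak : ¬ a = k := fun h => by have := congrArg Fin.val h; omega
        have hai : ¬ a = i := fun h => by have := congrArg Fin.val h; omega
        have hbk : ¬ b = k := fun h => by have := congrArg Fin.val h; omega
        rw [if_neg hak, if_neg hai, if_neg hbk, if_pos hbi]
        omega
  · -- acyclicity of reorient E S2
    apply isAcyclicRel_of_wt _
      (fun v => if v = k then 4 * (j : ℕ) + 5 else if v = i then 4 * (j : ℕ) + 6
        else 4 * (v : ℕ) + 4)
    rintro a b (⟨hab, hnS⟩ | hS)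
    · have hab' : (a : ℕ) < b := hE _ hab
      rw [hS2, Finset.mem_filter] at hnS
      have hc1 : (a = k ∨ a = i) → b < j → (a, b) = (k, i) := by
        intro h' hb
        by_contra hne
        exact hnS ⟨hab, Or.inl ⟨h', hb, hne⟩⟩
      have hc2 : (a, b) ≠ (k, j) := fun h' => hnS ⟨hab, Or.inr h'⟩
      by_cases hak : a = k
      · have hak' : (a : ℕ) = k := congrArg Fin.val hak
        by_cases hbj : b < j
        · have hbi : b = i := congrArg Prod.snd (hc1 (Or.inl hak) hbj)
          have hbi' : (b : ℕ) = i := congrArg Fin.val hbi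
          have hbk : ¬ b = k := fun h => by have := congrArg Fin.val h; omega
          rw [if_pos hak, if_neg hbk, if_pos hbi]
          omega
        · have hbj1 : (j : ℕ) ≤ b := Fin.le_def.mp (le_of_not_gt hbj)
          have hbj2 : (b : ℕ) ≠ j := fun h => hc2 (by rw [hak, Fin.ext h])
          have hbk : ¬ b = k := fun h => by have := congrArg Fin.val h; omega
          have hbi : ¬ b = i := fun h => by have := congrArg Fin.val h; omega
          rw [if_pos hak, if_neg hbk, if_neg hbi]
          omega
      · by_cases hai : a = i
        · have hai' : (a : ℕ) = i := congrArg Fin.val hai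
          have hbj : ¬ b < j := by
            intro hb
            have := congrArg Prod.fst (hc1 (Or.inr hai) hb)
            exact hkine (this.symm.trans hai)
          have hbj1 : (j : ℕ) ≤ b := Fin.le_def.mp (le_of_not_gt hbj)
          have hbj2 : (b : ℕ) ≠ j := by
            intro h
            apply h3
            rw [← hai, ← Fin.ext h]
            exact hab
          have hbk : ¬ b = k := fun h => by have := congrArg Fin.val h; omega
          have hbi : ¬ b = i := fun h => by have := congrArg Fin.val h; omega
          rw [if_neg hak, if_pos hai, if_neg hbk, if_neg hbi]
          omega
        · rw [if_neg hak, if_neg hai]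
          by_cases hbk : b = k
          · have := congrArg Fin.val hbk
            rw [if_pos hbk]
            omega
          · by_cases hbi : b = i
            · have := congrArg Fin.val hbi
              rw [if_neg hbk, if_pos hbi]
              omega
            · rw [if_neg hbk, if_neg hbi]
              omega
    · rw [hS2, Finset.mem_filter] at hS
      have hbaE : (b, a) ∈ E := hS.1
      have hba' : (b : ℕ) < a := hE _ hbaE
      rcases hS.2 with ⟨hbki, haj, hne⟩ | heq
      · have hbki' : b = k ∨ b = i := hbki
        have haj' : (a : ℕ) < j := haj
        rcases hbki' with hbk | hbi
        · have hbk' : (b : ℕ) = k := congrArg Fin.val hbk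
          have hak : ¬ a = k := fun h => by have := congrArg Fin.val h; omega
          have hai : ¬ a = i := by
            intro h
            apply hne
            rw [hbk, h]
          rw [if_neg hak, if_neg hai, if_pos hbk]
          omega
        · have hbi' : (b : ℕ) = i := congrArg Fin.val hbi
          have hak : ¬ a = k := fun h => by have := congrArg Fin.val h; omega
          have hai : ¬ a = i := fun h => by have := congrArg Fin.val h; omega
          have hbk : ¬ b = k := fun h => by have := congrArg Fin.val h; omega
          rw [if_neg hak, if_neg hai, if_neg hbk, if_pos hbi]
          omega
      · have hb : b = k := congrArg Prod.fst heq
        have ha : a = j := congrArg Prod.snd heq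
        have hb' : (b : ℕ) = k := congrArg Fin.val hb
        have ha' : (a : ℕ) = j := congrArg Fin.val ha
        have hak : ¬ a = k := fun h => by have := congrArg Fin.val h; omega
        have hai : ¬ a = i := fun h => by have := congrArg Fin.val h; omega
        rw [if_neg hak, if_neg hai, if_pos hb]
        omega
  · -- labels equal
    have hCk1 : S1.filter (fun e => e.1 = k) =
        insert ((k, i) : Fin n × Fin n) (E.filter (fun e => e.1 = k ∧ e.2 < j ∧ e.2 ≠ i)) := by
      ext e
      rw [Finset.mem_filter, hS1, Finset.mem_filter, Finset.mem_insert, Finset.mem_filter]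
      constructor
      · rintro ⟨⟨heE, -, hbj⟩, hek⟩
        by_cases hei : e.2 = i
        · left
          exact Prod.ext hek hei
        · right
          exact ⟨heE, hek, hbj, hei⟩
      · rintro (heq | ⟨heE, hek, hbj, -⟩)
        · subst heq
          exact ⟨⟨h1, Or.inl rfl, hij⟩, rfl⟩
        · exact ⟨⟨heE, Or.inl hek, hbj⟩, hek⟩
    have hCk2 : S2.filter (fun e => e.1 = k) =
        insert ((k, j) : Fin n × Fin n) (E.filter (fun e => e.1 = k ∧ e.2 < j ∧ e.2 ≠ i)) := by
      ext e
      rw [Finset.mem_filter, hS2, Finset.mem_filter, Finset.mem_insert, Finset.mem_filter]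
      constructor
      · rintro ⟨⟨heE, hc⟩, hek⟩
        rcases hc with ⟨-, hbj, hne⟩ | heq
        · right
          refine ⟨heE, hek, hbj, fun hei => hne (Prod.ext hek hei)⟩
        · left
          exact heq
      · rintro (heq | ⟨heE, hek, hbj, hei⟩)
        · subst heq
          exact ⟨⟨h2, Or.inr rfl⟩, rfl⟩
        · refine ⟨⟨heE, Or.inl ⟨Or.inl hek, hbj, fun heq => hei (congrArg Prod.snd heq)⟩⟩, hek⟩
    have hm1 : ((k, i) : Fin n × Fin n) ∉ E.filter (fun e => e.1 = k ∧ e.2 < j ∧ e.2 ≠ i) := by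
      rw [Finset.mem_filter]
      rintro ⟨-, -, -, hne⟩
      exact hne rfl
    have hm2 : ((k, j) : Fin n × Fin n) ∉ E.filter (fun e => e.1 = k ∧ e.2 < j ∧ e.2 ≠ i) := by
      rw [Finset.mem_filter]
      rintro ⟨-, -, hlt, -⟩
      exact lt_irrefl _ hlt
    have hk : psLabel S1 k = psLabel S2 k := by
      unfold psLabel
      rw [hCk1, hCk2, Finset.card_insert_of_notMem hm1, Finset.card_insert_of_notMem hm2]
    have hi : psLabel S1 i = psLabel S2 i := by
      unfold psLabel
      congr 1
      ext e
      rw [Finset.mem_filter, hS1, Finset.mem_filter, Finset.mem_filter, hS2, Finset.mem_filter]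
      constructor
      · rintro ⟨⟨heE, -, hbj⟩, hei⟩
        refine ⟨⟨heE, Or.inl ⟨Or.inr hei, hbj, ?_⟩⟩, hei⟩
        intro heq
        exact hkine ((congrArg Prod.fst heq).symm.trans hei)
      · rintro ⟨⟨heE, hc⟩, hei⟩
        rcases hc with ⟨-, hbj, -⟩ | heq
        · exact ⟨⟨heE, Or.inr hei, hbj⟩, hei⟩
        · exact (hkine ((congrArg Prod.fst heq).symm.trans hei)).elim
    funext v
    by_cases hvk : v = k
    · rw [hvk]
      exact hk
    · by_cases hvi : v = i
      · rw [hvi]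
        exact hi
      · rw [hz S1 htail1 v hvk hvi, hz S2 htail2 v hvk hvi]
end

section
/- Let G be an acyclic digraph on {1,…,n} with all edges oriented increasingly. If for every triple 1 ≤ k < i < j ≤ n with (k → i) ∈ E and (k → j) ∈ E one also has (i → j) ∈ E, then the Pak-Stanley labeling is injective: any two acyclic reorientations of G with the same label are equal. -/
private lemma cycle3 {α : Type*} {r : α → α → Prop} {x y z : α}
    (h1 : r x y) (h2 : r y z) (h3 : r z x) : Relation.TransGen r x x :=
  ((Relation.TransGen.single h1).tail h2).tail h3

/-- Key step: a discrepancy edge with tail `a` yields a discrepancy edge with larger tail. -/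
private lemma step {n : ℕ} {E S' S'' : Finset (Fin n × Fin n)}
    (hE : ∀ e ∈ E, e.1 < e.2)
    (hcl : ∀ k i j : Fin n, k < i → i < j → (k, i) ∈ E → (k, j) ∈ E → (i, j) ∈ E)
    (hS'E : S' ⊆ E) (hS''E : S'' ⊆ E)
    (hA' : IsAcyclicRel (reorient E S')) (hA'' : IsAcyclicRel (reorient E S''))
    (hlab : psLabel S' = psLabel S'') {a b : Fin n}
    (h1 : (a, b) ∈ S') (h2 : (a, b) ∉ S'') :
    ∃ p : Fin n × Fin n, a < p.1 ∧ ((p ∈ S' ∧ p ∉ S'') ∨ (p ∈ S'' ∧ p ∉ S')) := by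
  have hab : a < b := hE _ (hS'E h1)
  have habE : (a, b) ∈ E := hS'E h1
  have hcard : (S'.filter fun e => e.1 = a).card = (S''.filter fun e => e.1 = a).card :=
    congrFun hlab a
  have hnsub : ¬ (S''.filter fun e => e.1 = a) ⊆ (S'.filter fun e => e.1 = a) := by
    intro hsub
    have heq := Finset.eq_of_subset_of_card_le hsub (le_of_eq hcard)
    have : (a, b) ∈ S''.filter fun e => e.1 = a := by
      rw [heq]; exact Finset.mem_filter.2 ⟨h1, rfl⟩
    exact h2 (Finset.mem_filter.1 this).1
  obtain ⟨e, he1, he2⟩ := Finset.not_subset.1 hnsub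
  obtain ⟨heS'', hefst⟩ := Finset.mem_filter.1 he1
  set c := e.2 with hcdef
  have he : e = (a, c) := Prod.ext hefst rfl
  rw [he] at heS'' he2
  have hc1 : (a, c) ∈ S'' := heS''
  have hc2 : (a, c) ∉ S' := fun h => he2 (Finset.mem_filter.2 ⟨h, rfl⟩)
  have hacE : (a, c) ∈ E := hS''E hc1
  have hac : a < c := hE _ hacE
  have hcb : c ≠ b := fun h => h2 (h ▸ hc1)
  rcases lt_or_gt_of_ne hcb with hlt | hgt
  · -- c < b : the edge (c, b) is a discrepancy edge in S' \ S''
    have hcbE : (c, b) ∈ E := hcl a c b hac hlt hacE habE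
    have hcbS' : (c, b) ∈ S' := by
      by_contra h
      exact hA' a (cycle3 (r := reorient E S')
        (Or.inl ⟨hacE, hc2⟩) (Or.inl ⟨hcbE, h⟩) (Or.inr h1))
    have hcbS'' : (c, b) ∉ S'' := by
      intro h
      exact hA'' a (cycle3 (r := reorient E S'')
        (Or.inl ⟨habE, h2⟩) (Or.inr h) (Or.inr hc1))
    exact ⟨(c, b), hac, Or.inl ⟨hcbS', hcbS''⟩⟩
  · -- b < c : the edge (b, c) is a discrepancy edge in S'' \ S'
    have hbcE : (b, c) ∈ E := hcl a b c hab hgt habE hacE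
    have hbcS' : (b, c) ∉ S' := by
      intro h
      exact hA' b (cycle3 (r := reorient E S')
        (Or.inr h1) (Or.inl ⟨hacE, hc2⟩) (Or.inr h))
    have hbcS'' : (b, c) ∈ S'' := by
      by_contra h
      exact hA'' a (cycle3 (r := reorient E S'')
        (Or.inl ⟨habE, h2⟩) (Or.inl ⟨hbcE, h⟩) (Or.inr hc1))
    exact ⟨(b, c), hab, Or.inr ⟨hbcS'', hbcS'⟩⟩

/-- If for every `k < i < j` with edges `k → i` and `k → j` the edge `i → j` is also
present, then the Pak-Stanley labeling of acyclic reorientations is injective. -/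
theorem labeling_injective_of_closure (n : ℕ) (E : Finset (Fin n × Fin n))
    (hE : ∀ e ∈ E, e.1 < e.2)
    (hcl : ∀ k i j : Fin n, k < i → i < j → (k, i) ∈ E → (k, j) ∈ E → (i, j) ∈ E) :
    ∀ S' ⊆ E, ∀ S'' ⊆ E, IsAcyclicRel (reorient E S') → IsAcyclicRel (reorient E S'') →
      psLabel S' = psLabel S'' → S' = S'' := by
  intro S' hS'E S'' hS''E hA' hA'' hlab
  by_contra hne
  classical
  set D : Finset (Fin n × Fin n) :=
    (S' ∪ S'').filter (fun p => (p ∈ S' ∧ p ∉ S'') ∨ (p ∈ S'' ∧ p ∉ S')) with hD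
  have hmemD : ∀ p : Fin n × Fin n, ((p ∈ S' ∧ p ∉ S'') ∨ (p ∈ S'' ∧ p ∉ S')) → p ∈ D := by
    intro p hp
    refine Finset.mem_filter.2 ⟨Finset.mem_union.2 ?_, hp⟩
    rcases hp with ⟨h, _⟩ | ⟨h, _⟩
    · exact Or.inl h
    · exact Or.inr h
  have hDne : D.Nonempty := by
    have : ∃ p, ¬ (p ∈ S' ↔ p ∈ S'') := by
      by_contra h
      push_neg at h
      exact hne (Finset.ext fun p => h p)
    obtain ⟨p, hp⟩ := this
    by_cases h1 : p ∈ S'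
    · exact ⟨p, hmemD p (Or.inl ⟨h1, fun h2 => hp ⟨fun _ => h2, fun _ => h1⟩⟩)⟩
    · have h2 : p ∈ S'' := by
        by_contra h2
        exact hp ⟨fun h => absurd h h1, fun h => absurd h h2⟩
      exact ⟨p, hmemD p (Or.inr ⟨h2, h1⟩)⟩
  have hIne : (D.image Prod.fst).Nonempty := hDne.image _
  set a : Fin n := (D.image Prod.fst).max' hIne with ha
  obtain ⟨p, hpD, hpa⟩ := Finset.mem_image.1 ((D.image Prod.fst).max'_mem hIne)
  have hpdisc := (Finset.mem_filter.1 hpD).2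
  have key : ∃ q : Fin n × Fin n, a < q.1 ∧ ((q ∈ S' ∧ q ∉ S'') ∨ (q ∈ S'' ∧ q ∉ S')) := by
    obtain ⟨px, py⟩ := p
    cases hpa
    rcases hpdisc with ⟨h1, h2⟩ | ⟨h1, h2⟩
    · exact step hE hcl hS'E hS''E hA' hA'' hlab h1 h2
    · obtain ⟨q, hq1, hq2⟩ := step hE hcl hS''E hS'E hA'' hA' hlab.symm h1 h2
      exact ⟨q, hq1, hq2.symm⟩
  obtain ⟨q, hq1, hq2⟩ := key
  have : q.1 ≤ a := Finset.le_max' _ _ (Finset.mem_image_of_mem Prod.fst (hmemD q hq2))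
  exact absurd hq1 (not_lt.2 this)
end

section
/- Let G be an acyclic digraph on {1,…,n} with edges oriented increasingly. The Pak-Stanley labeling of the acyclic reorientations of G (λ(v) = number of edges out of v in G that are reversed) fails to be injective if and only if there exist 1 ≤ k < i < j ≤ n such that (k → i) ∈ E, (k → j) ∈ E, and (i → j) ∉ E. -/
lemma acyclic_of_lt {n : ℕ} (R : Fin n → Fin n → Prop) (f : Fin n → ℕ)
    (hf : ∀ a b, R a b → f a < f b) : IsAcyclicRel R := by
  intro v hv
  have key : ∀ {a b : Fin n}, Relation.TransGen R a b → f a < f b := by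
    intro a b h
    induction h with
    | single h => exact hf _ _ h
    | tail _ h ih => exact ih.trans (hf _ _ h)
  exact lt_irrefl _ (key hv)

lemma psLabel_insert {n : ℕ} (S : Finset (Fin n × Fin n)) (e : Fin n × Fin n)
    (he : e ∉ S) (v : Fin n) :
    psLabel (insert e S) v = psLabel S v + if e.1 = v then 1 else 0 := by
  unfold psLabel
  rw [Finset.filter_insert]
  by_cases h : e.1 = v
  · rw [if_pos h, if_pos h,
      Finset.card_insert_of_notMem (fun hm => he (Finset.mem_filter.1 hm).1)]
  · rw [if_neg h, if_neg h, add_zero]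

lemma aux_acyclic {n : ℕ} {E S : Finset (Fin n × Fin n)} {k p q : Fin n}
    (hE : ∀ e ∈ E, e.1 < e.2)
    (hkp : k < p) (hkq : k < q) (hpq : p ≠ q)
    (hPQ : (p, q) ∉ E) (hQP : (q, p) ∉ E)
    (hS : ∀ e : Fin n × Fin n, e ∈ S ↔ e ∈ E ∧ k < e.1 ∧ (e.2 = p ∨ e.2 = q)) :
    IsAcyclicRel (reorient E (insert (k, p) S)) := by
  apply acyclic_of_lt _
    (fun v => if v = p then 4 * k.val + 2 else if v = q then 4 * k.val + 5 else 4 * v.val + 4)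
  intro a b hab
  have hkp' : k.val < p.val := hkp
  have hkq' : k.val < q.val := hkq
  rcases hab with ⟨habE, habS⟩ | hrev
  · have hab' : a.val < b.val := hE _ habE
    rw [Finset.mem_insert] at habS
    push_neg at habS
    obtain ⟨hne, hnS⟩ := habS
    rw [hS] at hnS
    have hble : b = p ∨ b = q → a.val ≤ k.val := by
      intro h
      by_contra hk
      push_neg at hk
      exact hnS ⟨habE, hk, h⟩
    by_cases hbp : b = p
    · have h1 : a ≠ k := fun h => hne (by rw [h, hbp])
      have h2 : a.val ≤ k.val := hble (Or.inl hbp)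
      have h3 : a.val ≠ k.val := fun hv => h1 (Fin.ext hv)
      have hap : a ≠ p := fun h => absurd hab' (by rw [h, hbp]; exact lt_irrefl _)
      have haq : a ≠ q := fun h => hQP (by rw [← h, ← hbp]; exact habE)
      rw [if_neg hap, if_neg haq, if_pos hbp]
      omega
    · by_cases hbq : b = q
      · have h2 : a.val ≤ k.val := hble (Or.inr hbq)
        have hap : a ≠ p := fun h => hPQ (by rw [← h, ← hbq]; exact habE)
        have haq : a ≠ q := fun h => absurd hab' (by rw [h, hbq]; exact lt_irrefl _)
        rw [if_neg hap, if_neg haq, if_neg hbp, if_pos hbq]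
        omega
      · rw [if_neg hbp, if_neg hbq]
        by_cases hap : a = p
        · rw [if_pos hap]
          have h3 : p.val < b.val := by rw [← hap]; exact hab'
          omega
        · by_cases haq : a = q
          · rw [if_neg hap, if_pos haq]
            have h3 : q.val < b.val := by rw [← haq]; exact hab'
            omega
          · rw [if_neg hap, if_neg haq]
            omega
  · rcases Finset.mem_insert.1 hrev with heq | hmem
    · have hb : b = k := congrArg Prod.fst heq
      have ha : a = p := congrArg Prod.snd heq
      have hbp : b ≠ p := by rw [hb]; exact ne_of_lt hkp
      have hbq : b ≠ q := by rw [hb]; exact ne_of_lt hkq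
      have hb' : b.val = k.val := congrArg Fin.val hb
      rw [if_pos ha, if_neg hbp, if_neg hbq]
      omega
    · rw [hS] at hmem
      obtain ⟨hmE, hmk, hma⟩ := hmem
      have hmk' : k.val < b.val := hmk
      have hba' : b.val < a.val := hE _ hmE
      have hma' : a = p ∨ a = q := hma
      have hbp : b ≠ p := by
        intro h
        rcases hma' with h2 | h2
        · exact absurd hba' (by rw [h, h2]; exact lt_irrefl _)
        · exact hPQ (by rw [← h, ← h2]; exact hmE)
      have hbq : b ≠ q := by
        intro h
        rcases hma' with h2 | h2
        · exact hQP (by rw [← h, ← h2]; exact hmE)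
        · exact absurd hba' (by rw [h, h2]; exact lt_irrefl _)
      rcases hma' with h2 | h2
      · rw [if_pos h2, if_neg hbp, if_neg hbq]
        omega
      · have hap : a ≠ p := fun h3 => hpq (by rw [← h3, h2])
        rw [if_neg hap, if_pos h2, if_neg hbp, if_neg hbq]
        omega

lemma step_lemma {n : ℕ} {E S' S'' : Finset (Fin n × Fin n)}
    (hE : ∀ e ∈ E, e.1 < e.2)
    (hpat : ∀ k i j : Fin n, k < i → i < j → (k, i) ∈ E → (k, j) ∈ E → (i, j) ∈ E)
    (hS' : S' ⊆ E) (hS'' : S'' ⊆ E)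
    (hac' : IsAcyclicRel (reorient E S')) (hac'' : IsAcyclicRel (reorient E S''))
    (hlab : psLabel S' = psLabel S'')
    {a b : Fin n} (hab1 : (a, b) ∈ S') (hab2 : (a, b) ∉ S'') :
    ∃ c d : Fin n, (((c, d) ∈ S' ∧ (c, d) ∉ S'') ∨ ((c, d) ∈ S'' ∧ (c, d) ∉ S')) ∧ a < c := by
  have hcard : (S'.filter fun e => e.1 = a).card = (S''.filter fun e => e.1 = a).card :=
    congrFun hlab a
  have hex : ∃ e ∈ S''.filter (fun e => e.1 = a), e ∉ S'.filter (fun e => e.1 = a) := by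
    by_contra h
    push_neg at h
    have heq := Finset.eq_of_subset_of_card_le h (le_of_eq hcard)
    have hm : (a, b) ∈ S''.filter (fun e => e.1 = a) := by
      rw [heq]; exact Finset.mem_filter.2 ⟨hab1, rfl⟩
    exact hab2 (Finset.mem_filter.1 hm).1
  obtain ⟨e, he1, he2⟩ := hex
  obtain ⟨a', b'⟩ := e
  obtain ⟨heS'', hea⟩ := Finset.mem_filter.1 he1
  dsimp at hea
  subst hea
  have heS' : (a', b') ∉ S' := fun h => he2 (Finset.mem_filter.2 ⟨h, rfl⟩)
  have habE : (a', b) ∈ E := hS' hab1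
  have habE' : (a', b') ∈ E := hS'' heS''
  have hab_lt : a' < b := hE _ habE
  have hab_lt' : a' < b' := hE _ habE'
  have hbb' : b ≠ b' := fun h => hab2 (h ▸ heS'')
  rcases lt_or_gt_of_ne hbb' with h | h
  · have hbbE : (b, b') ∈ E := hpat a' b b' hab_lt h habE habE'
    have h1 : (b, b') ∉ S' := by
      intro hmem
      exact hac' b (Relation.TransGen.tail (Relation.TransGen.tail
        (Relation.TransGen.single (Or.inr hab1)) (Or.inl ⟨habE', heS'⟩)) (Or.inr hmem))
    have h2 : (b, b') ∈ S'' := by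
      by_contra hmem
      exact hac'' a' (Relation.TransGen.tail (Relation.TransGen.tail
        (Relation.TransGen.single (Or.inl ⟨habE, hab2⟩)) (Or.inl ⟨hbbE, hmem⟩)) (Or.inr heS''))
    exact ⟨b, b', Or.inr ⟨h2, h1⟩, hab_lt⟩
  · have hbbE : (b', b) ∈ E := hpat a' b' b hab_lt' h habE' habE
    have h1 : (b', b) ∈ S' := by
      by_contra hmem
      exact hac' b (Relation.TransGen.tail (Relation.TransGen.tail
        (Relation.TransGen.single (Or.inr hab1)) (Or.inl ⟨habE', heS'⟩)) (Or.inl ⟨hbbE, hmem⟩))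
    have h2 : (b', b) ∉ S'' := by
      intro hmem
      exact hac'' a' (Relation.TransGen.tail (Relation.TransGen.tail
        (Relation.TransGen.single (Or.inl ⟨habE, hab2⟩)) (Or.inr hmem)) (Or.inr heS''))
    exact ⟨b', b, Or.inl ⟨h1, h2⟩, hab_lt'⟩

/-- Main theorem: the Pak-Stanley labeling of the acyclic reorientations of an
increasingly oriented acyclic digraph fails to be injective if and only if there exist
`k < i < j` with `(k → i), (k → j)` edges and `(i → j)` not an edge. -/
theorem labeling_not_injective_iff (n : ℕ) (E : Finset (Fin n × Fin n))
    (hE : ∀ e ∈ E, e.1 < e.2) :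
    (¬ ∀ S' ⊆ E, ∀ S'' ⊆ E, IsAcyclicRel (reorient E S') → IsAcyclicRel (reorient E S'') →
        psLabel S' = psLabel S'' → S' = S'') ↔
      ∃ k i j : Fin n, k < i ∧ i < j ∧ (k, i) ∈ E ∧ (k, j) ∈ E ∧ (i, j) ∉ E := by
  constructor
  · intro hni
    by_contra hpat
    push_neg at hpat
    apply hni
    intro S' hS' S'' hS'' hac' hac'' hlab
    by_contra hne
    have hD : ((S' \ S'') ∪ (S'' \ S')).Nonempty := by
      rw [Finset.nonempty_iff_ne_empty]
      intro h
      rw [Finset.union_eq_empty] at h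
      exact hne (Finset.Subset.antisymm
        (Finset.sdiff_eq_empty_iff_subset.1 h.1) (Finset.sdiff_eq_empty_iff_subset.1 h.2))
    obtain ⟨m, hm, hmax⟩ := Finset.exists_max_image _ (fun e => e.1) hD
    obtain ⟨ma, mb⟩ := m
    rcases Finset.mem_union.1 hm with h | h
    · obtain ⟨hmem1, hmem2⟩ := Finset.mem_sdiff.1 h
      obtain ⟨c, d, hcd, hlt⟩ :=
        step_lemma hE hpat hS' hS'' hac' hac'' hlab hmem1 hmem2
      have hmem : (c, d) ∈ (S' \ S'') ∪ (S'' \ S') := by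
        rcases hcd with h' | h'
        · exact Finset.mem_union_left _ (Finset.mem_sdiff.2 h')
        · exact Finset.mem_union_right _ (Finset.mem_sdiff.2 h')
      exact absurd (hmax _ hmem) (not_le.2 hlt)
    · obtain ⟨hmem1, hmem2⟩ := Finset.mem_sdiff.1 h
      obtain ⟨c, d, hcd, hlt⟩ :=
        step_lemma hE hpat hS'' hS' hac'' hac' hlab.symm hmem1 hmem2
      have hmem : (c, d) ∈ (S' \ S'') ∪ (S'' \ S') := by
        rcases hcd with h' | h'
        · exact Finset.mem_union_right _ (Finset.mem_sdiff.2 h')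
        · exact Finset.mem_union_left _ (Finset.mem_sdiff.2 h')
      exact absurd (hmax _ hmem) (not_le.2 hlt)
  · rintro ⟨k, i, j, hki, hij, hEki, hEkj, hEij⟩
    intro hinj
    set S : Finset (Fin n × Fin n) :=
      E.filter (fun e => k < e.1 ∧ (e.2 = i ∨ e.2 = j)) with hSdef
    have hSmem : ∀ e : Fin n × Fin n, e ∈ S ↔ e ∈ E ∧ k < e.1 ∧ (e.2 = i ∨ e.2 = j) := by
      intro e; rw [hSdef, Finset.mem_filter]
    have hkiS : (k, i) ∉ S := fun h => lt_irrefl k ((hSmem _).1 h).2.1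
    have hkjS : (k, j) ∉ S := fun h => lt_irrefl k ((hSmem _).1 h).2.1
    have hSE : S ⊆ E := Finset.filter_subset _ _
    have hS'E : insert (k, i) S ⊆ E := Finset.insert_subset hEki hSE
    have hS''E : insert (k, j) S ⊆ E := Finset.insert_subset hEkj hSE
    have hEji : (j, i) ∉ E := fun h => lt_asymm hij (hE _ h)
    have hac1 : IsAcyclicRel (reorient E (insert (k, i) S)) :=
      aux_acyclic hE hki (hki.trans hij) (ne_of_lt hij) hEij hEji hSmem
    have hac2 : IsAcyclicRel (reorient E (insert (k, j) S)) :=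
      aux_acyclic hE (hki.trans hij) hki (ne_of_lt hij).symm hEji hEij
        (fun e => by rw [hSmem e]; tauto)
    have hlabels : psLabel (insert (k, i) S) = psLabel (insert (k, j) S) := by
      funext v
      rw [psLabel_insert _ _ hkiS, psLabel_insert _ _ hkjS]
    have heq := hinj _ hS'E _ hS''E hac1 hac2 hlabels
    have : (k, i) ∈ insert (k, j) S := heq ▸ Finset.mem_insert_self _ _
    rcases Finset.mem_insert.1 this with h | h
    · exact absurd (congrArg Prod.snd h) (ne_of_lt hij)
    · exact hkiS h
end

section
/- Let G be an acyclic digraph on {1,…,n} with edges oriented increasingly, and suppose 1 ≤ k < i < j ≤ n satisfy (k → i), (k → j) ∈ E and (i → j) ∉ E. Define G' as the reorientation of G reversing exactly the edges from k to vertices in {k+1,…,j-1} ∩ N⁺(k), the edges from i to vertices in {i+1,…,j-1} ∩ N⁺(i), and additionally the edge (k → i); define G'' similarly but reversing (k → j) instead of (k → i). Then G' and G'' are both acyclic. -/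
/-!
Both reorientations have a topological order obtained from the natural order of `Fin n` by
moving `k` and `i` next to `j`: just below `j` (first `i`, then `k`) when `k → i` is reversed,
and just above `j` (first `k`, then `i`) when `k → j` is reversed. The other reversed edges
`k → b` and `i → b` have `b < j`, so after reversal they point up to `k` or `i`, while every
kept edge out of `k` or `i` ends above `j` (for `i` this is where `(i, j) ∉ E` enters).
-/

theorem isAcyclicRel_of_map_lt {α β : Type*} [Preorder β] {R : α → α → Prop} (f : α → β)
    (h : ∀ a b, R a b → f a < f b) : IsAcyclicRel R := fun v hv =>
  lt_irrefl (f v) (by simpa [Relation.transGen_eq_self] using Relation.TransGen.lift f h _ _ hv)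

theorem isAcyclicRel_reorient {n : ℕ} {β : Type*} [Preorder β] {E S : Finset (Fin n × Fin n)}
    (f : Fin n → β) (hE : ∀ e ∈ E, e ∉ S → f e.1 < f e.2) (hS : ∀ e ∈ S, f e.2 < f e.1) :
    IsAcyclicRel (reorient E S) :=
  isAcyclicRel_of_map_lt f fun _ _ hab => hab.elim (fun h => hE _ h.1 h.2) (hS _)

section Construction

variable {n : ℕ} {E : Finset (Fin n × Fin n)} {k i j : Fin n}

def commonReversal (E : Finset (Fin n × Fin n)) (k i j : Fin n) : Finset (Fin n × Fin n) :=
  E.filter fun e => (e.1 = k ∧ e.2 < j ∧ e.2 ≠ i) ∨ (e.1 = i ∧ e.2 < j)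

theorem mem_commonReversal {e : Fin n × Fin n} :
    e ∈ commonReversal E k i j ↔
      e ∈ E ∧ ((e.1 = k ∧ e.2 < j ∧ e.2 ≠ i) ∨ (e.1 = i ∧ e.2 < j)) :=
  Finset.mem_filter

theorem eq_or_le_of_notMem_commonReversal_k {b : Fin n} (hkb : (k, b) ∈ E)
    (hS : (k, b) ∉ commonReversal E k i j) : b = i ∨ j ≤ b := by
  by_contra! h
  exact hS (mem_commonReversal.2 ⟨hkb, Or.inl ⟨rfl, h.2, h.1⟩⟩)

theorem lt_of_notMem_commonReversal_i (h3 : (i, j) ∉ E) {b : Fin n} (hib : (i, b) ∈ E)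
    (hS : (i, b) ∉ commonReversal E k i j) : j < b := by
  refine lt_of_le_of_ne (not_lt.1 fun hb => hS (mem_commonReversal.2 ⟨hib, Or.inr ⟨rfl, hb⟩⟩)) ?_
  rintro rfl
  exact h3 hib

theorem isAcyclicRel_reorient_insert_ki (hE : ∀ e ∈ E, e.1 < e.2) (hki : k < i) (hij : i < j)
    (h3 : (i, j) ∉ E) : IsAcyclicRel (reorient E (insert (k, i) (commonReversal E k i j))) := by
  refine isAcyclicRel_reorient
    (fun v => if v = k then 3 * j.val - 1 else if v = i then 3 * j.val - 2 else 3 * v.val) ?_ ?_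
  · rintro ⟨a, b⟩ hab hS
    rw [Finset.mem_insert, not_or] at hS
    have hk : a = k → j ≤ b := by
      rintro rfl
      exact (eq_or_le_of_notMem_commonReversal_k hab hS.2).resolve_left fun hbi =>
        hS.1 (by rw [hbi])
    have hi : a = i → j < b := by
      rintro rfl; exact lt_of_notMem_commonReversal_i h3 hab hS.2
    have hab' := hE _ hab
    simp only [Fin.ext_iff, Fin.lt_def, Fin.le_def] at *
    split_ifs <;> omega
  · rintro ⟨a, b⟩ hS
    rw [Finset.mem_insert, mem_commonReversal] at hS
    rcases hS with hS | ⟨hab, hS⟩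
    · obtain ⟨rfl, rfl⟩ := Prod.mk.inj hS
      simp only [if_pos, hki.ne', if_false]
      omega
    · have hab' := hE _ hab
      simp only [Fin.ext_iff, Fin.lt_def] at *
      split_ifs <;> omega

theorem isAcyclicRel_reorient_insert_kj (hE : ∀ e ∈ E, e.1 < e.2) (hki : k < i) (hij : i < j)
    (h3 : (i, j) ∉ E) : IsAcyclicRel (reorient E (insert (k, j) (commonReversal E k i j))) := by
  refine isAcyclicRel_reorient
    (fun v => if v = k then 3 * j.val + 1 else if v = i then 3 * j.val + 2 else 3 * v.val) ?_ ?_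
  · rintro ⟨a, b⟩ hab hS
    rw [Finset.mem_insert, not_or] at hS
    have hk : a = k → b = i ∨ j < b := by
      rintro rfl
      refine (eq_or_le_of_notMem_commonReversal_k hab hS.2).imp_right fun hjb => ?_
      exact lt_of_le_of_ne hjb fun hjb => hS.1 (by rw [hjb])
    have hi : a = i → j < b := by
      rintro rfl; exact lt_of_notMem_commonReversal_i h3 hab hS.2
    have hab' := hE _ hab
    simp only [Fin.ext_iff, Fin.lt_def] at *
    split_ifs <;> omega
  · rintro ⟨a, b⟩ hS
    rw [Finset.mem_insert, mem_commonReversal] at hS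
    rcases hS with hS | ⟨hab, hS⟩
    · obtain ⟨rfl, rfl⟩ := Prod.mk.inj hS
      simp only [if_pos, (hki.trans hij).ne', hij.ne', if_false]
      omega
    · have hab' := hE _ hab
      simp only [Fin.ext_iff, Fin.lt_def] at *
      split_ifs <;> omega

end Construction

theorem constructed_reorientations_acyclic_general (n : ℕ) (E : Finset (Fin n × Fin n))
    (hE : ∀ e ∈ E, e.1 < e.2) (k i j : Fin n) (hki : k < i) (hij : i < j)
    (h3 : (i, j) ∉ E) :
    IsAcyclicRel (reorient E (insert (k, i)
      (E.filter fun e => (e.1 = k ∧ e.2 < j ∧ e.2 ≠ i) ∨ (e.1 = i ∧ e.2 < j)))) ∧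
    IsAcyclicRel (reorient E (insert (k, j)
      (E.filter fun e => (e.1 = k ∧ e.2 < j ∧ e.2 ≠ i) ∨ (e.1 = i ∧ e.2 < j)))) :=
  ⟨isAcyclicRel_reorient_insert_ki hE hki hij h3, isAcyclicRel_reorient_insert_kj hE hki hij h3⟩

/-- The two reorientations constructed in the proof of the main theorem (reversing the
edges from `k` to `{k+1,…,j-1}` (other than `k → i`), the edges from `i` to
`{i+1,…,j-1}`, and additionally `k → i` resp. `k → j`) are both acyclic. -/
theorem constructed_reorientations_acyclic (n : ℕ) (E : Finset (Fin n × Fin n))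
    (hE : ∀ e ∈ E, e.1 < e.2) (k i j : Fin n) (hki : k < i) (hij : i < j)
    (h1 : (k, i) ∈ E) (h2 : (k, j) ∈ E) (h3 : (i, j) ∉ E) :
    IsAcyclicRel (reorient E (insert (k, i)
      (E.filter fun e => (e.1 = k ∧ e.2 < j ∧ e.2 ≠ i) ∨ (e.1 = i ∧ e.2 < j)))) ∧
    IsAcyclicRel (reorient E (insert (k, j)
      (E.filter fun e => (e.1 = k ∧ e.2 < j ∧ e.2 ≠ i) ∨ (e.1 = i ∧ e.2 < j)))) :=
  constructed_reorientations_acyclic_general n E hE k i j hki hij h3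
end

section
/- Every Pak-Stanley label of a region of a multigraphical arrangement A is a G_A-parking function. -/
/-- Every Pak-Stanley label of a region of a multigraphical arrangement `A` is a
`G_A`-parking function.  The arrangement consists of hyperplanes `{x_i - x_j = a}`
encoded as triples `(i, j, a)` with `a > 0`; a region is encoded by a point `x` of
`V = {∑ x_i = 0}` lying on no hyperplane; the hyperplane `(i,j,a)` separates the region
of `x` from the region of the origin exactly when `x i - x j > a`. -/
theorem label_is_parking_function (n : ℕ) (A : Finset (Fin n × Fin n × ℝ))
    (hpos : ∀ t ∈ A, 0 < t.2.2) (x : Fin n → ℝ) (hxV : ∑ i, x i = 0)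
    (hoff : ∀ t ∈ A, x t.1 - x t.2.1 ≠ t.2.2) :
    ∀ I : Finset (Fin n), I.Nonempty →
      ∃ i ∈ I, (A.filter fun t => t.1 = i ∧ t.2.2 < x t.1 - x t.2.1).card ≤
        (A.filter fun t => t.1 = i ∧ t.2.1 ∉ I).card := by
  intro I hI
  obtain ⟨i, hiI, hmin⟩ := I.exists_min_image x hI
  refine ⟨i, hiI, Finset.card_le_card ?_⟩
  intro t ht
  simp only [Finset.mem_filter] at ht ⊢
  obtain ⟨htA, ht1, hsep⟩ := ht
  refine ⟨htA, ht1, fun hj => ?_⟩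
  have h1 := hmin t.2.1 hj
  have h2 := hpos t htA
  rw [ht1] at hsep
  linarith
end

section
/- Let G be an acyclic digraph and G* an acyclic reorientation of G. Then the Pak-Stanley label λ of G*, defined by λ(v) = number of edges of G with tail v that are reversed in G*, is a G-parking function: for every nonempty set I of vertices there is i ∈ I with λ(i) ≤ #{edges (i → j) of G with j ∉ I}. -/
/-- The Pak-Stanley label of an acyclic reorientation of an acyclic digraph `G` is a
`G`-parking function: for every nonempty vertex set `I` there is `i ∈ I` whose number
of reversed out-edges is at most the number of edges of `G` from `i` leaving `I`. -/
theorem reorientation_label_is_parking (n : ℕ) (E : Finset (Fin n × Fin n))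
    (hG : IsAcyclicRel fun a b : Fin n => (a, b) ∈ E)
    (S : Finset (Fin n × Fin n)) (hS : S ⊆ E)
    (hac : IsAcyclicRel (reorient E S)) :
    ∀ I : Finset (Fin n), I.Nonempty →
      ∃ i ∈ I, psLabel S i ≤ (E.filter fun e => e.1 = i ∧ e.2 ∉ I).card := by
  intro I hI
  set r : Fin n → Fin n → Prop := Relation.TransGen (reorient E S) with hr
  have htrans : IsTrans (Fin n) r := ⟨fun _ _ _ => Relation.TransGen.trans⟩
  have hirrefl : IsIrrefl (Fin n) r := ⟨fun a => hac a⟩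
  have hwf : WellFounded r := Finite.wellFounded_of_trans_of_irrefl r
  obtain ⟨i, hiI, hmin⟩ := hwf.has_min (↑I : Set (Fin n)) ⟨hI.choose, hI.choose_spec⟩
  refine ⟨i, hiI, ?_⟩
  apply Finset.card_le_card
  intro e he
  simp only [Finset.mem_filter] at he ⊢
  obtain ⟨heS, he1⟩ := he
  refine ⟨hS heS, he1, ?_⟩
  intro h2I
  apply hmin e.2 h2I
  exact Relation.TransGen.single (Or.inr (by rw [← he1]; exact heS))
end

section
/- Let G be an acyclic digraph on {1,…,n} with edges oriented increasingly such that for all k < i < j, (k → i) ∈ E and (k → j) ∈ E imply (i → j) ∈ E. Then the number of G-parking functions that arise as Pak-Stanley labels of acyclic reorientations of G equals the number of acyclic reorientations of G (i.e., the number of acyclic orientations of the underlying undirected graph). -/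
private lemma cycle3_s11 {α : Type*} {R : α → α → Prop} {a b c : α}
    (h1 : R a b) (h2 : R b c) (h3 : R c a) (hac : IsAcyclicRel R) : False :=
  hac a ((Relation.TransGen.single h1).trans
    ((Relation.TransGen.single h2).trans (Relation.TransGen.single h3)))

private lemma step_s11 {n : ℕ} {E S T : Finset (Fin n × Fin n)}
    (hE : ∀ e ∈ E, e.1 < e.2)
    (hcl : ∀ k i j : Fin n, k < i → i < j → (k, i) ∈ E → (k, j) ∈ E → (i, j) ∈ E)
    (hSE : S ⊆ E) (hTE : T ⊆ E)
    (hS : IsAcyclicRel (reorient E S)) (hT : IsAcyclicRel (reorient E T))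
    {v u0 w0 : Fin n} (IH : ∀ p : Fin n × Fin n, v < p.1 → (p ∈ S ↔ p ∈ T))
    (hw0S : (v, w0) ∈ S) (hw0T : (v, w0) ∉ T)
    (hu0T : (v, u0) ∈ T) (hu0S : (v, u0) ∉ S)
    (hlt : u0 < w0) : False := by
  have hvw0E : (v, w0) ∈ E := hSE hw0S
  have hvu0E : (v, u0) ∈ E := hTE hu0T
  have hvu0 : v < u0 := hE _ hvu0E
  have huw : (u0, w0) ∈ E := hcl v u0 w0 hvu0 hlt hvu0E hvw0E
  by_cases hc : (u0, w0) ∈ S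
  · have hcT : (u0, w0) ∈ T := (IH _ hvu0).mp hc
    exact cycle3_s11 (R := reorient E T)
      (Or.inl ⟨hvw0E, hw0T⟩) (Or.inr hcT) (Or.inr hu0T) hT
  · exact cycle3_s11 (R := reorient E S)
      (Or.inl ⟨hvu0E, hu0S⟩) (Or.inl ⟨huw, hc⟩) (Or.inr hw0S) hS

private lemma memdir {n : ℕ} {E S T : Finset (Fin n × Fin n)}
    (hE : ∀ e ∈ E, e.1 < e.2)
    (hcl : ∀ k i j : Fin n, k < i → i < j → (k, i) ∈ E → (k, j) ∈ E → (i, j) ∈ E)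
    (hSE : S ⊆ E) (hTE : T ⊆ E)
    (hS : IsAcyclicRel (reorient E S)) (hT : IsAcyclicRel (reorient E T))
    {v w0 : Fin n} (IH : ∀ p : Fin n × Fin n, v < p.1 → (p ∈ S ↔ p ∈ T))
    (hlabel : psLabel S v = psLabel T v)
    (hw0S : (v, w0) ∈ S) : (v, w0) ∈ T := by
  classical
  by_contra hw0T
  have hex : ∃ u0, (v, u0) ∈ T ∧ (v, u0) ∉ S := by
    by_contra hno
    push_neg at hno
    have hsub : T.filter (fun e => e.1 = v) ⊆ S.filter (fun e => e.1 = v) := by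
      intro e he
      simp only [Finset.mem_filter] at he ⊢
      obtain ⟨heT, he1⟩ := he
      have hee : e = (v, e.2) := Prod.ext he1 rfl
      rw [hee] at heT ⊢
      exact ⟨hno e.2 heT, rfl⟩
    have hss : T.filter (fun e => e.1 = v) ⊂ S.filter (fun e => e.1 = v) := by
      refine ⟨hsub, fun h2 => hw0T ?_⟩
      have : (v, w0) ∈ T.filter (fun e => e.1 = v) :=
        h2 (Finset.mem_filter.mpr ⟨hw0S, rfl⟩)
      exact (Finset.mem_filter.mp this).1
    have := Finset.card_lt_card hss
    simp only [psLabel] at hlabel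
    omega
  obtain ⟨u0, hu0T, hu0S⟩ := hex
  have hne : u0 ≠ w0 := fun h => hu0S (h ▸ hw0S)
  rcases lt_or_gt_of_ne hne with h | h
  · exact step_s11 hE hcl hSE hTE hS hT IH hw0S hw0T hu0T hu0S h
  · exact step_s11 hE hcl hTE hSE hT hS (fun p hp => (IH p hp).symm) hu0T hu0S hw0S hw0T h

private lemma label_inj {n : ℕ} {E S T : Finset (Fin n × Fin n)}
    (hE : ∀ e ∈ E, e.1 < e.2)
    (hcl : ∀ k i j : Fin n, k < i → i < j → (k, i) ∈ E → (k, j) ∈ E → (i, j) ∈ E)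
    (hSE : S ⊆ E) (hTE : T ⊆ E)
    (hS : IsAcyclicRel (reorient E S)) (hT : IsAcyclicRel (reorient E T))
    (h : psLabel S = psLabel T) : S = T := by
  have key : ∀ m : ℕ, ∀ p : Fin n × Fin n, n - p.1.val ≤ m → (p ∈ S ↔ p ∈ T) := by
    intro m
    induction m with
    | zero =>
      intro p hp
      have := p.1.isLt
      omega
    | succ m ih =>
      rintro ⟨v, w⟩ hp
      have IH : ∀ q : Fin n × Fin n, v < q.1 → (q ∈ S ↔ q ∈ T) := by
        intro q hq
        refine ih q ?_
        have h1 := q.1.isLt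
        have h2 : v.val < q.1.val := hq
        simp only at hp ⊢
        omega
      constructor
      · intro hmem
        exact memdir hE hcl hSE hTE hS hT IH (congrFun h v) hmem
      · intro hmem
        exact memdir hE hcl hTE hSE hT hS (fun p hp => (IH p hp).symm)
          (congrFun h v).symm hmem
  ext p
  exact key (n - p.1.val) p le_rfl

open Classical in
/-- Under the closure condition of the main theorem, the number of Pak-Stanley labels
arising from acyclic reorientations equals the number of acyclic reorientations. -/
theorem card_labels_eq_card_reorientations (n : ℕ) (E : Finset (Fin n × Fin n))
    (hE : ∀ e ∈ E, e.1 < e.2)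
    (hcl : ∀ k i j : Fin n, k < i → i < j → (k, i) ∈ E → (k, j) ∈ E → (i, j) ∈ E) :
    ((E.powerset.filter fun S => IsAcyclicRel (reorient E S)).image psLabel).card =
      (E.powerset.filter fun S => IsAcyclicRel (reorient E S)).card := by
  refine Finset.card_image_of_injOn ?_
  intro S hSmem T hTmem hps
  simp only [Finset.mem_coe, Finset.mem_filter, Finset.mem_powerset] at hSmem hTmem
  exact label_inj hE hcl hSmem.1 hTmem.1 hSmem.2 hTmem.2 hps
end
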